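/- Under the weighted K-NN classification utility ν with sorted training points and 1 ≤ K ≤ N, the Shapley values satisfy s_N = (1/N)·∑_{k=0}^{K−1} (1/binom(N−1,k)) · ∑_{S ∈ B_k(N)} (ν(S∪{N}) − ν(S)), and for every 1 ≤ i ≤ N−1, s_i = s_{i+1} + (1/(N−1))·[ ∑_{k=0}^{K−2} (1/binom(N−2,k)) · ∑_{S ∈ B_k(i)∩B_k(i+1)} (ν(S∪{i}) − ν(S∪{i+1})) + ∑_{k=K−1}^{N−2} (1/binom(N−2,k)) · ∑_{S ∈ B_{K−1}(i)∩B_{K−1}(i+1)} binom(N − max(S∪{i,i+1}), k−K+1) · (ν(S∪{i}) − ν(S∪{i+1})) ], where empty sums are 0. -/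

import Mathlib

/-!
A point that is not among the `K` nearest neighbours of the enlarged coalition does not change
`ν`, so the marginal contribution of the farthest point `N` vanishes on coalitions of size
`≥ K`. For adjacent points `i`, `i + 1`, the Shapley weights satisfy
`1/(n C(n-1,t)) + 1/(n C(n-1,t+1)) = 1/((n-1) C(n-2,t))`, which turns `s_i - s_{i+1}` into a
weighted sum of `ν(T ∪ {i}) - ν(T ∪ {i+1})` over coalitions `T` avoiding both points. That
difference is a fixed amount when fewer than `K` points of `T` are nearer than `i`, and `0`
otherwise. Such a `T` with `|T| = k ≥ K - 1` is its `K - 1` nearest points `S` together with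
`k - K + 1` points farther than `max (S ∪ {i, i+1})`, which gives the binomial coefficient.
-/

open Finset

/-- The Shapley value of player `i` in the cooperative game with player set `P`
and utility function `ν`. -/
noncomputable def shapley (P : Finset ℕ) (ν : Finset ℕ → ℝ) (i : ℕ) : ℝ :=
  (1 / (P.card : ℝ)) * ∑ S ∈ (P.erase i).powerset,
    (1 / ((P.card - 1).choose S.card : ℝ)) * (ν (insert i S) - ν S)

/-- The weighted K-NN classification utility: training points are sorted by
increasing distance to the test point, so the k-th nearest neighbor within `S`
is the k-th smallest element of `S` (given by the sorted list of `S`). -/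
noncomputable def wknnUtil (K : ℕ) (w : ℕ → ℝ) (y : ℕ → ℕ) (ytest : ℕ)
    (S : Finset ℕ) : ℝ :=
  ∑ k ∈ Finset.range (min K S.card),
    w ((S.sort (· ≤ ·)).getD k 0) *
      (if y ((S.sort (· ≤ ·)).getD k 0) = ytest then (1 : ℝ) else 0)

/-- `B_k(i)`: the family of subsets `S ⊆ {1,…,N}` with `|S| = k` and `i ∉ S`. -/
def Bk (N k i : ℕ) : Finset (Finset ℕ) := ((Finset.Icc 1 N).erase i).powersetCard k

namespace Finset

variable {α : Type*} [LinearOrder α]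

theorem card_filter_lt_orderEmbOfFin (s : Finset α) {n : ℕ} (h : #s = n) (i : Fin n) :
    #{t ∈ s | t < s.orderEmbOfFin h i} = i := by
  have : {t ∈ s | t < s.orderEmbOfFin h i} = (Iio i).map (s.orderEmbOfFin h).toEmbedding := by
    ext t
    simp only [mem_filter, mem_map, mem_Iio, RelEmbedding.coe_toEmbedding]
    constructor
    · rintro ⟨ht, hlt⟩
      obtain ⟨j, rfl⟩ : t ∈ Set.range (s.orderEmbOfFin h) := by simpa using ht
      exact ⟨j, (s.orderEmbOfFin h).lt_iff_lt.mp hlt, rfl⟩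
    · rintro ⟨j, hj, rfl⟩
      exact ⟨s.orderEmbOfFin_mem h j, (s.orderEmbOfFin h).lt_iff_lt.mpr hj⟩
  rw [this, card_map, Fin.card_Iio]

def lowest (c : ℕ) (T : Finset α) : Finset α := {x ∈ T | #{t ∈ T | t < x} < c}

variable {c : ℕ} {S T E : Finset α} {a x z : α}

theorem mem_lowest : x ∈ lowest c T ↔ x ∈ T ∧ #{t ∈ T | t < x} < c := mem_filter

theorem lowest_subset : lowest c T ⊆ T := filter_subset _ _

theorem lowest_eq_map (c : ℕ) (T : Finset α) :
    lowest c T = ({j : Fin #T | j < c} : Finset _).map (T.orderEmbOfFin rfl).toEmbedding := by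
  ext x
  simp only [mem_lowest, mem_map, mem_filter, mem_univ, true_and, RelEmbedding.coe_toEmbedding]
  constructor
  · rintro ⟨hx, hc⟩
    obtain ⟨j, rfl⟩ : x ∈ Set.range (T.orderEmbOfFin rfl) := by simpa using hx
    exact ⟨j, by rwa [card_filter_lt_orderEmbOfFin] at hc, rfl⟩
  · rintro ⟨j, hj, rfl⟩
    exact ⟨T.orderEmbOfFin_mem rfl j, by rwa [card_filter_lt_orderEmbOfFin]⟩

theorem card_lowest (c : ℕ) (T : Finset α) : #(lowest c T) = min c #T := by
  rw [lowest_eq_map, card_map, Fin.card_filter_val_lt, min_comm]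

theorem lt_of_mem_lowest_of_mem_sdiff (hx : x ∈ lowest c T) (hz : z ∈ T \ lowest c T) :
    x < z := by
  rw [mem_sdiff, mem_lowest] at hz
  rw [mem_lowest] at hx
  by_contra! hzx
  have hmono := card_le_card (monotone_filter_right T fun t _ (ht : t < z) => ht.trans_le hzx)
  exact hz.2 ⟨hz.1, hmono.trans_lt hx.2⟩

theorem lowest_union_of_forall_lt (hSE : ∀ s ∈ S, ∀ e ∈ E, s < e) (hS : #S = c) :
    lowest c (S ∪ E) = S := by
  have below : ∀ x ∈ S, {t ∈ S ∪ E | t < x} = {t ∈ S | t < x} := fun x hx => by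
    rw [filter_union, union_eq_left]
    exact fun t ht => absurd (hSE x hx t (mem_filter.mp ht).1) (mem_filter.mp ht).2.asymm
  ext x
  rw [mem_lowest]
  constructor
  · rintro ⟨hx, hc⟩
    by_contra hxS
    have hxE : x ∈ E := (mem_union.mp hx).resolve_left hxS
    have : S ⊆ {t ∈ S ∪ E | t < x} := fun s hs =>
      mem_filter.mpr ⟨mem_union_left _ hs, hSE s hs x hxE⟩
    exact (card_le_card this).not_gt (hS ▸ hc)
  · intro hx
    refine ⟨mem_union_left _ hx, ?_⟩
    rw [below x hx, ← hS]
    exact card_lt_card (filter_ssubset.mpr ⟨x, hx, lt_irrefl x⟩)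

theorem lowest_insert_of_forall_lt (hc : c ≤ #S) (hS : ∀ s ∈ S, s < a) :
    lowest c (insert a S) = lowest c S := by
  ext x
  rw [mem_lowest, mem_lowest, filter_insert, mem_insert]
  by_cases hxa : x = a
  · subst hxa
    simp only [lt_irrefl, if_false, filter_true_of_mem hS, true_or, true_and]
    exact ⟨fun h => (h.not_ge hc).elim, fun h => (lt_irrefl x (hS x h.1)).elim⟩
  · simp only [hxa, false_or]
    exact and_congr_right fun hx => by rw [if_neg (hS x hx).asymm]

theorem sum_lowest_insert {M : Type*} [AddCommMonoid M] (f : α → M) (ha : a ∉ T) :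
    ∑ x ∈ lowest c (insert a T), f x =
      (if #{t ∈ T | t < a} < c then f a else 0) +
        ∑ x ∈ T, if #{t ∈ insert a T | t < x} < c then f x else 0 := by
  rw [lowest, sum_filter, sum_insert ha, filter_insert, if_neg (lt_irrefl a)]

theorem sum_lowest_insert_sub_sum_lowest_insert {M : Type*} [AddCommGroup M] (f : α → M)
    {b : α} (ha : a ∉ T) (hb : b ∉ T) (hab : ∀ t ∈ T, t < a ↔ t < b) :
    ∑ x ∈ lowest c (insert a T), f x - ∑ x ∈ lowest c (insert b T), f x =
      if #{t ∈ T | t < a} < c then f a - f b else 0 := by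
  have below_eq : ∀ x ∈ T, #{t ∈ insert a T | t < x} = #{t ∈ insert b T | t < x} := by
    intro x hx
    have hxa : x ≠ a := fun h => ha (h ▸ hx)
    have hxb : x ≠ b := fun h => hb (h ▸ hx)
    have hab' : a < x ↔ b < x := by
      rw [← not_le, ← not_le, le_iff_lt_or_eq, le_iff_lt_or_eq, hab x hx]
      simp [hxa, hxb]
    rw [filter_insert, filter_insert]
    by_cases hax : a < x
    · rw [if_pos hax, if_pos (hab'.mp hax),
        card_insert_of_notMem fun h => ha (mem_filter.mp h).1,
        card_insert_of_notMem fun h => hb (mem_filter.mp h).1]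
    · rw [if_neg hax, if_neg (mt hab'.mpr hax)]
  have hcard : #{t ∈ T | t < b} = #{t ∈ T | t < a} := by
    rw [filter_congr fun t ht => (hab t ht).symm]
  rw [sum_lowest_insert f ha, sum_lowest_insert f hb, hcard,
    sum_congr rfl fun x hx => by rw [below_eq x hx]]
  split_ifs <;> abel

theorem lt_of_mem_sdiff_lowest (ha : a ∉ T) (hT : #{t ∈ T | t < a} ≤ c)
    (hz : z ∈ T \ lowest c T) : a < z := by
  rw [mem_sdiff, mem_lowest] at hz
  by_contra! hza
  have hlt : z < a := hza.lt_of_ne fun h => ha (h ▸ hz.1)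
  have : insert z {t ∈ T | t < z} ⊆ {t ∈ T | t < a} := by
    refine insert_subset (mem_filter.mpr ⟨hz.1, hlt⟩) ?_
    exact monotone_filter_right T fun t _ ht => ht.trans hlt
  have := card_le_card this
  rw [card_insert_of_notMem (s := {t ∈ T | t < z}) (by simp)] at this
  exact hz.2 ⟨hz.1, by omega⟩

theorem forall_mem_insert_lowest_lt (ha : a ∉ T) (hT : #{t ∈ T | t < a} ≤ c)
    (hz : z ∈ T \ lowest c T) : ∀ s ∈ insert a (lowest c T), s < z := by
  intro s hs
  rcases mem_insert.mp hs with rfl | hs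
  · exact lt_of_mem_sdiff_lowest ha hT hz
  · exact lt_of_mem_lowest_of_mem_sdiff hs hz

theorem card_powersetCard_filter_card_filter_lt_le {D : Finset α} (ha : a ∉ D) {k : ℕ}
    (hck : c ≤ k) :
    #{T ∈ D.powersetCard k | #{t ∈ T | t < a} ≤ c} =
      ∑ S ∈ D.powersetCard c, (#{d ∈ D | ∀ s ∈ insert a S, s < d}).choose (k - c) := by
  have hmaps : ∀ T ∈ {T ∈ D.powersetCard k | #{t ∈ T | t < a} ≤ c},
      lowest c T ∈ D.powersetCard c := by
    intro T hT
    obtain ⟨⟨hTD, hTk⟩, -⟩ := mem_filter.mp hT |>.imp_left mem_powersetCard.mp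
    refine mem_powersetCard.mpr ⟨lowest_subset.trans hTD, ?_⟩
    rw [card_lowest, hTk, min_eq_left hck]
  rw [card_eq_sum_card_fiberwise hmaps]
  refine sum_congr rfl fun S hS => ?_
  obtain ⟨hSD, hSc⟩ := mem_powersetCard.mp hS
  set U := {d ∈ D | ∀ s ∈ insert a S, s < d}
  have above : ∀ E ∈ U.powersetCard (k - c), ∀ s ∈ S, ∀ e ∈ E, s < e :=
    fun E hE s hs e he => (mem_filter.mp ((mem_powersetCard.mp hE).1 he)).2 s (mem_insert_of_mem hs)
  have hdisj : ∀ E ∈ U.powersetCard (k - c), Disjoint S E := fun E hE =>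
    disjoint_left.mpr fun s hs hsE => lt_irrefl s (above E hE s hs s hsE)
  rw [← card_powersetCard]
  refine card_bij' (fun T _ => T \ S) (fun E _ => S ∪ E) ?_ ?_ ?_ ?_
  · intro T hT
    simp only [mem_filter, mem_powersetCard] at hT
    obtain ⟨⟨⟨hTD, hTk⟩, hTa⟩, rfl⟩ := hT
    refine mem_powersetCard.mpr ⟨fun z hz => mem_filter.mpr ⟨hTD (mem_sdiff.mp hz).1,
      forall_mem_insert_lowest_lt (fun h => ha (hTD h)) hTa hz⟩, ?_⟩
    rw [card_sdiff_of_subset lowest_subset, hTk, hSc]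
  · intro E hE
    have hED := (mem_powersetCard.mp hE).1
    have hEa : ∀ e ∈ E, a < e := fun e he =>
      (mem_filter.mp (hED he)).2 a (mem_insert_self a S)
    simp only [mem_filter, mem_powersetCard]
    refine ⟨⟨⟨union_subset hSD fun e he => (mem_filter.mp (hED he)).1, ?_⟩, ?_⟩, ?_⟩
    · rw [card_union_of_disjoint (hdisj E hE), hSc, (mem_powersetCard.mp hE).2]
      omega
    · refine hSc ▸ card_le_card fun t ht => ?_
      obtain ⟨ht, hta⟩ := mem_filter.mp ht
      exact (mem_union.mp ht).resolve_right fun htE => (hEa t htE).asymm hta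
    · exact lowest_union_of_forall_lt (above E hE) hSc
  · intro T hT
    exact union_sdiff_of_subset ((mem_filter.mp hT).2 ▸ lowest_subset)
  · intro E hE
    exact union_sdiff_cancel_left (hdisj E hE)

end Finset

theorem inv_choose_add_inv_choose_succ {n t : ℕ} (ht : t ≤ n) :
    ((n : ℝ) + 2)⁻¹ * (((n + 1).choose t : ℝ)⁻¹ + ((n + 1).choose (t + 1) : ℝ)⁻¹) =
      ((n : ℝ) + 1)⁻¹ * (n.choose t : ℝ)⁻¹ := by
  have h₀ : ((n + 1).choose t : ℝ) * (n + 1 - t) = n.choose t * (n + 1) := by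
    rw [← Nat.cast_add_one, ← Nat.cast_sub (by omega), ← Nat.cast_mul, ← Nat.cast_mul,
      Nat.choose_mul_succ_eq]
  have h₁ : ((n + 1).choose (t + 1) : ℝ) * (t + 1) = (n + 1) * n.choose t := by
    exact_mod_cast (Nat.add_one_mul_choose_eq n t).symm
  have : (0 : ℝ) < (n + 1).choose t := by exact_mod_cast Nat.choose_pos (by omega)
  have : (0 : ℝ) < (n + 1).choose (t + 1) := by exact_mod_cast Nat.choose_pos (by omega)
  have : (0 : ℝ) < n.choose t := by exact_mod_cast Nat.choose_pos ht
  field_simp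
  linear_combination (-((n + 1).choose (t + 1) : ℝ)) * h₀ - ((n + 1).choose t : ℝ) * h₁

theorem shapley_eq_sum_range_of_insert_eq (P : Finset ℕ) (ν : Finset ℕ → ℝ) {i K : ℕ}
    (hi : i ∈ P) (hK : K ≤ #P)
    (hν : ∀ S ⊆ P.erase i, K ≤ #S → ν (insert i S) = ν S) :
    shapley P ν i = 1 / (#P : ℝ) * ∑ k ∈ range K, 1 / ((#P - 1).choose k : ℝ) *
      ∑ S ∈ (P.erase i).powersetCard k, (ν (insert i S) - ν S) := by
  have hcard : #(P.erase i) + 1 = #P := card_erase_add_one hi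
  rw [shapley, sum_powerset, hcard]
  congr 1
  refine (sum_subset (range_subset_range.mpr hK) fun k _ hkK => ?_).symm.trans
    (sum_congr rfl fun k _ => ?_)
  · refine sum_eq_zero fun S hS => ?_
    obtain ⟨hSP, rfl⟩ := mem_powersetCard.mp hS
    rw [hν S hSP (not_lt.mp (mt mem_range.mpr hkK)), sub_self, mul_zero]
  · rw [mul_sum]
    exact sum_congr rfl fun S hS => by rw [(mem_powersetCard.mp hS).2]

theorem shapley_sub_shapley (P : Finset ℕ) (ν : Finset ℕ → ℝ) {i j : ℕ} (hi : i ∈ P)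
    (hj : j ∈ P) (hij : i ≠ j) :
    shapley P ν i - shapley P ν j = 1 / ((#P : ℝ) - 1) *
      ∑ T ∈ ((P.erase i).erase j).powerset,
        1 / ((#P - 2).choose #T : ℝ) * (ν (insert i T) - ν (insert j T)) := by
  set D := (P.erase i).erase j
  have hjD : j ∉ D := notMem_erase j _
  have hiD : i ∉ D := fun h => notMem_erase i P (mem_of_mem_erase h)
  have hPi : P.erase i = insert j D := (insert_erase (mem_erase.mpr ⟨hij.symm, hj⟩)).symm
  have hPj : P.erase j = insert i D := by
    rw [show D = (P.erase j).erase i from erase_right_comm,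
      insert_erase (mem_erase.mpr ⟨hij, hi⟩)]
  have hcard : #P = #D + 2 := by rw [← card_erase_add_one hi, hPi, card_insert_of_notMem hjD]
  rw [shapley, shapley, hPi, hPj, sum_powerset_insert hjD, sum_powerset_insert hiD, ← mul_sub,
    ← sum_add_distrib, ← sum_add_distrib, ← sum_sub_distrib, mul_sum, mul_sum]
  refine sum_congr rfl fun T hT => ?_
  have hTD := mem_powerset.mp hT
  have key := inv_choose_add_inv_choose_succ (card_le_card hTD)
  rw [card_insert_of_notMem fun h => hiD (hTD h), card_insert_of_notMem fun h => hjD (hTD h),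
    insert_comm, hcard]
  simp only [one_div, Nat.add_sub_cancel, Nat.cast_add, Nat.cast_ofNat,
    show #D + 2 - 1 = #D + 1 from rfl] at key ⊢
  linear_combination (ν (insert i T) - ν (insert j T)) * key

theorem Bk_inter_Bk (N k i j : ℕ) :
    Bk N k i ∩ Bk N k j = (((Icc 1 N).erase i).erase j).powersetCard k := by
  ext S
  simp only [Bk, mem_inter, mem_powersetCard, subset_iff, mem_erase]
  grind

theorem card_filter_forall_lt_eq_sub_sup (N i : ℕ) (S : Finset ℕ) :
    #{d ∈ ((Icc 1 N).erase i).erase (i + 1) | ∀ s ∈ insert i S, s < d} =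
      N - (insert i (insert (i + 1) S)).sup id := by
  rw [← Nat.card_Ioc]
  congr 1
  ext d
  simp only [mem_filter, mem_erase, mem_Icc, mem_insert, forall_eq_or_imp, mem_Ioc, sup_insert,
    id, max_lt_iff]
  constructor
  · rintro ⟨⟨hdi1, -, -, hdN⟩, hid, hSd⟩
    exact ⟨⟨hid, by omega, (Finset.sup_lt_iff (Nat.zero_lt_of_lt hid)).mpr hSd⟩, hdN⟩
  · rintro ⟨⟨hid, hi1d, hSd⟩, hdN⟩
    exact ⟨⟨by omega, by omega, by omega, hdN⟩, hid,
      (Finset.sup_lt_iff (Nat.zero_lt_of_lt hid)).mp hSd⟩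

section WeightedKNN

variable (K : ℕ) (w : ℕ → ℝ) (y : ℕ → ℕ) (ytest : ℕ)

theorem wknnUtil_eq_sum_lowest (S : Finset ℕ) :
    wknnUtil K w y ytest S = ∑ x ∈ lowest K S, w x * if y x = ytest then 1 else 0 := by
  set f : ℕ → ℝ := fun x => w x * if y x = ytest then 1 else 0
  have hsort : ∀ j : Fin #S, S.orderEmbOfFin rfl j = (S.sort (· ≤ ·)).getD j 0 := fun j => by
    rw [orderEmbOfFin_apply, List.getD_eq_getElem _ _ (by simp)]
    rfl
  calc wknnUtil K w y ytest S
      = ∑ k ∈ range #S, if k < K then f ((S.sort (· ≤ ·)).getD k 0) else 0 := by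
        rw [wknnUtil, ← sum_filter]
        congr 1
        ext k
        simp only [mem_range, mem_filter]
        omega
    _ = ∑ j : Fin #S, if (j : ℕ) < K then f (S.orderEmbOfFin rfl j) else 0 := by
        simp only [hsort]
        exact (Fin.sum_univ_eq_sum_range
          (fun k => if k < K then f ((S.sort (· ≤ ·)).getD k 0) else 0) _).symm
    _ = ∑ x ∈ lowest K S, f x := by
        rw [lowest_eq_map, sum_map, sum_filter]
        rfl

theorem wknnUtil_insert_of_forall_lt {S : Finset ℕ} {a : ℕ} (hK : K ≤ #S)
    (hS : ∀ s ∈ S, s < a) :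
    wknnUtil K w y ytest (insert a S) = wknnUtil K w y ytest S := by
  rw [wknnUtil_eq_sum_lowest, wknnUtil_eq_sum_lowest, lowest_insert_of_forall_lt hK hS]

theorem wknnUtil_insert_sub_insert_succ {T : Finset ℕ} {i : ℕ} (hi : i ∉ T)
    (hi' : i + 1 ∉ T) :
    wknnUtil K w y ytest (insert i T) - wknnUtil K w y ytest (insert (i + 1) T) =
      if #{t ∈ T | t < i} < K then
        (w i * if y i = ytest then 1 else 0) - w (i + 1) * if y (i + 1) = ytest then 1 else 0
      else 0 := by
  rw [wknnUtil_eq_sum_lowest, wknnUtil_eq_sum_lowest]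
  refine sum_lowest_insert_sub_sum_lowest_insert _ hi hi' fun t ht => ?_
  have : t ≠ i := fun h => hi (h ▸ ht)
  omega

theorem sum_powersetCard_wknnUtil_sub_of_le (hK : 1 ≤ K) (N i : ℕ) {k : ℕ}
    (hk : K - 1 ≤ k) :
    ∑ T ∈ (((Icc 1 N).erase i).erase (i + 1)).powersetCard k,
        (wknnUtil K w y ytest (insert i T) - wknnUtil K w y ytest (insert (i + 1) T)) =
      ∑ S ∈ (((Icc 1 N).erase i).erase (i + 1)).powersetCard (K - 1),
        ((N - (insert i (insert (i + 1) S)).sup id).choose (k + 1 - K) : ℝ) *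
          (wknnUtil K w y ytest (insert i S) - wknnUtil K w y ytest (insert (i + 1) S)) := by
  obtain ⟨c, rfl⟩ := Nat.exists_eq_add_of_le' hK
  simp only [Nat.add_sub_cancel, Nat.add_sub_add_right] at hk ⊢
  set D := ((Icc 1 N).erase i).erase (i + 1)
  set δ : ℝ :=
    (w i * if y i = ytest then 1 else 0) - w (i + 1) * if y (i + 1) = ytest then 1 else 0
  have hiD : i ∉ D := fun h => notMem_erase i _ (mem_of_mem_erase h)
  have hΔ : ∀ T ⊆ D, wknnUtil (c + 1) w y ytest (insert i T) -
      wknnUtil (c + 1) w y ytest (insert (i + 1) T) = if #{t ∈ T | t < i} ≤ c then δ else 0 :=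
    fun T hT => by
      rw [wknnUtil_insert_sub_insert_succ _ _ _ _ (fun h => hiD (hT h))
        (fun h => notMem_erase (i + 1) _ (hT h))]
      simp only [Nat.lt_succ_iff, δ]
  calc _ = #{T ∈ D.powersetCard k | #{t ∈ T | t < i} ≤ c} * δ := by
        rw [sum_congr rfl fun T hT => hΔ T (mem_powersetCard.mp hT).1, sum_ite, sum_const_zero,
          add_zero, sum_const, nsmul_eq_mul]
    _ = ∑ S ∈ D.powersetCard c,
          (#{d ∈ D | ∀ s ∈ insert i S, s < d}).choose (k - c) * δ := by
        rw [card_powersetCard_filter_card_filter_lt_le hiD hk, Nat.cast_sum, sum_mul]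
    _ = _ := by
        refine sum_congr rfl fun S hS => ?_
        obtain ⟨hSD, hSc⟩ := mem_powersetCard.mp hS
        rw [hΔ S hSD, if_pos (hSc ▸ card_filter_le S _), card_filter_forall_lt_eq_sub_sup]

theorem sum_powerset_wknnUtil_sub {N : ℕ} (hK1 : 1 ≤ K) (hKN : K ≤ N) {i : ℕ}
    (hi1 : 1 ≤ i) (hiN : i ≤ N - 1) :
    ∑ T ∈ (((Icc 1 N).erase i).erase (i + 1)).powerset, 1 / ((N - 2).choose #T : ℝ) *
        (wknnUtil K w y ytest (insert i T) - wknnUtil K w y ytest (insert (i + 1) T)) =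
      (∑ k ∈ Finset.range (K - 1), (1 / ((N - 2).choose k : ℝ)) *
          ∑ S ∈ Bk N k i ∩ Bk N k (i + 1),
            (wknnUtil K w y ytest (insert i S) - wknnUtil K w y ytest (insert (i + 1) S))) +
        ∑ k ∈ Finset.Icc (K - 1) (N - 2), (1 / ((N - 2).choose k : ℝ)) *
          ∑ S ∈ Bk N (K - 1) i ∩ Bk N (K - 1) (i + 1),
            ((N - (insert i (insert (i + 1) S)).sup id).choose (k + 1 - K) : ℝ) *
              (wknnUtil K w y ytest (insert i S) - wknnUtil K w y ytest (insert (i + 1) S)) := by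
  have hD : #(((Icc 1 N).erase i).erase (i + 1)) = N - 2 := by
    rw [card_erase_of_mem (by simp; omega), card_erase_of_mem (by simp; omega), Nat.card_Icc]
    omega
  rw [sum_powerset, hD, ← sum_range_add_sum_Ico _ (show K - 1 ≤ N - 2 + 1 by omega),
    Ico_add_one_right_eq_Icc]
  congr 1 <;> refine sum_congr rfl fun k hk => ?_
  · rw [Bk_inter_Bk, mul_sum]
    exact sum_congr rfl fun T hT => by rw [(mem_powersetCard.mp hT).2]
  · rw [Bk_inter_Bk,
      ← sum_powersetCard_wknnUtil_sub_of_le K w y ytest hK1 N i (mem_Icc.mp hk).1, mul_sum]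
    exact sum_congr rfl fun T hT => by rw [(mem_powersetCard.mp hT).2]

end WeightedKNN

/-- Recursion for the Shapley values of the weighted K-NN classifier. -/
theorem wknn_shapley_recursion (N K : ℕ) (hK1 : 1 ≤ K) (hKN : K ≤ N)
    (w : ℕ → ℝ) (y : ℕ → ℕ) (ytest : ℕ) :
    shapley (Finset.Icc 1 N) (wknnUtil K w y ytest) N =
      (1 / (N : ℝ)) * ∑ k ∈ Finset.range K, (1 / ((N - 1).choose k : ℝ)) *
        ∑ S ∈ Bk N k N,
          (wknnUtil K w y ytest (insert N S) - wknnUtil K w y ytest S) ∧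
    ∀ i, 1 ≤ i → i ≤ N - 1 →
      shapley (Finset.Icc 1 N) (wknnUtil K w y ytest) i =
        shapley (Finset.Icc 1 N) (wknnUtil K w y ytest) (i + 1) +
          (1 / ((N : ℝ) - 1)) *
            ((∑ k ∈ Finset.range (K - 1), (1 / ((N - 2).choose k : ℝ)) *
                ∑ S ∈ Bk N k i ∩ Bk N k (i + 1),
                  (wknnUtil K w y ytest (insert i S) -
                    wknnUtil K w y ytest (insert (i + 1) S))) +
              ∑ k ∈ Finset.Icc (K - 1) (N - 2), (1 / ((N - 2).choose k : ℝ)) *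
                ∑ S ∈ Bk N (K - 1) i ∩ Bk N (K - 1) (i + 1),
                  ((N - (insert i (insert (i + 1) S)).sup id).choose (k + 1 - K) : ℝ) *
                    (wknnUtil K w y ytest (insert i S) -
                      wknnUtil K w y ytest (insert (i + 1) S))) := by
  have hN1 : 1 ≤ N := hK1.trans hKN
  have hcard : #(Icc 1 N) = N := by rw [Nat.card_Icc, Nat.add_sub_cancel]
  refine ⟨?_, fun i hi1 hiN => ?_⟩
  · have hmax : ∀ S ⊆ (Icc 1 N).erase N, ∀ s ∈ S, s < N := fun S hS s hs => by
      have := mem_erase.mp (hS hs)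
      rw [mem_Icc] at this
      omega
    rw [shapley_eq_sum_range_of_insert_eq _ _ (mem_Icc.mpr ⟨hN1, le_rfl⟩) (hcard.symm ▸ hKN)
      fun S hS hKS => wknnUtil_insert_of_forall_lt K w y ytest hKS (hmax S hS), hcard]
    rfl
  · rw [← sub_eq_iff_eq_add', shapley_sub_shapley _ _ (mem_Icc.mpr ⟨hi1, by omega⟩)
      (mem_Icc.mpr ⟨by omega, by omega⟩) (by omega), hcard,
      sum_powerset_wknnUtil_sub K w y ytest hK1 hKN hi1 hiN]
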